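/- There exists a finite rotation-puzzle instance 𝒜 over the three-color tile set T_3 (the MOVE subpuzzle, moving a wire sideways) with a designated input boundary edge at its bottom and a designated output boundary edge at its top horizontally displaced by two positions from the input edge, such that for each color c ∈ {blue, red} the instance 𝒜 has exactly one solution whose color at the input edge is c, and this solution has color c at the output edge. -/

import Mathlib

/-- The three Tantrix colors used in the three-color tile set. -/
inductive Color where
  | red
  | yellow
  | blue
deriving DecidableEq

/-- A tile is its clockwise color sequence: a word of length 6 over the colors,
edges indexed `0, …, 5` clockwise. -/
abbrev Tile := Fin 6 → Color

/-- Cyclic rotation of a tile by `k` steps: edge `i` of the rotated tile carries the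
color of edge `i + k` of the original sequence. -/
def rotTile (k : Fin 6) (t : Tile) : Tile := fun i => t (i + k)

open Color in
/-- The three-color tile set `T₃`, consisting of the 14 color sequences
yrrbby, ryybbr, yrrybb, ryyrbb, brrbyy, yrbybr, rbyryb, brybyr, brbyyr, bybrry,
ryrbby, rbryyb, ybyrrb, yrybbr. -/
def T3 : Set Tile :=
  { ![yellow,red,red,blue,blue,yellow],
    ![red,yellow,yellow,blue,blue,red],
    ![yellow,red,red,yellow,blue,blue],
    ![red,yellow,yellow,red,blue,blue],
    ![blue,red,red,blue,yellow,yellow],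
    ![yellow,red,blue,yellow,blue,red],
    ![red,blue,yellow,red,yellow,blue],
    ![blue,red,yellow,blue,yellow,red],
    ![blue,red,blue,yellow,yellow,red],
    ![blue,yellow,blue,red,red,yellow],
    ![red,yellow,red,blue,blue,yellow],
    ![red,blue,red,yellow,yellow,blue],
    ![yellow,blue,yellow,red,red,blue],
    ![yellow,red,yellow,blue,blue,red] }

/-- The six neighbor offsets of the hexagonal layout of `ℤ²`, listed clockwise
starting from straight up; edge `i` of a tile at `x` is the edge shared with the
neighboring point `x + dirs i`, and opposite directions differ by `3` (mod 6).
Two points are neighbors exactly if their difference is one of these offsets. -/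
def dirs : Fin 6 → ℤ × ℤ := ![(0,1), (1,1), (1,0), (0,-1), (-1,-1), (-1,0)]

/-- A finite rotation-puzzle instance over the tile set `T3`:
a function from a finite set of points of `ℤ²` to `T3`. -/
structure Puzzle where
  tiles : ℤ × ℤ → Option Tile
  finite : {x | tiles x ≠ none}.Finite
  memT3 : ∀ x t, tiles x = some t → t ∈ T3

/-- `sol` is a solution of the instance `P`: it assigns to each occupied point a
cyclic rotation of the tile placed there, such that for every pair of neighboring
occupied points the two assigned sequences give the same color to their joint edge
(edge `d` of the tile at `x` is glued to edge `d + 3` of the tile at `x + dirs d`). -/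
def IsSolution (P : Puzzle) (sol : ℤ × ℤ → Option Tile) : Prop :=
  (∀ x, (P.tiles x = none → sol x = none) ∧
    (∀ t, P.tiles x = some t → ∃ k : Fin 6, sol x = some (rotTile k t))) ∧
  (∀ (x : ℤ × ℤ) (d : Fin 6) (s s' : Tile),
    sol x = some s → sol (x + dirs d) = some s' → s d = s' (d + 3))

/-- `(x, d)` is a boundary edge of `P`: the point `x` is occupied and its
neighbor in direction `d` is not. -/
def IsBoundary (P : Puzzle) (x : ℤ × ℤ) (d : Fin 6) : Prop :=
  P.tiles x ≠ none ∧ P.tiles (x + dirs d) = none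

/-- The solution `sol` has color `c` at the edge in direction `d` of the tile at `x`. -/
def SolColor (sol : ℤ × ℤ → Option Tile) (x : ℤ × ℤ) (d : Fin 6) (c : Color) : Prop :=
  ∃ s, sol x = some s ∧ s d = c

/-!
The MOVE gadget consists of three copies of the tile yrrbby at `(-1,-1)`, `(0,-1)`, `(0,0)`
and one ryybbr at `(1,0)`; the input edge is the bottom of `(-1,-1)`, the output edge the top
of `(1,0)`. A solution is determined by the rotations of its four tiles, and the matching
conditions on the five inner edges are decidable constraints on `Fin 6 ^ 4`: checking them
exhaustively shows that input color blue forces the rotations `(1,5,3,3)`, input red forces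
`(5,3,1,5)`, and in both solutions the output edge carries the input color.
-/

namespace Puzzle

def rotate (P : Puzzle) (r : ℤ × ℤ → Fin 6) : ℤ × ℤ → Option Tile :=
  fun x => (P.tiles x).map (rotTile (r x))

theorem rotate_congr (P : Puzzle) {r r' : ℤ × ℤ → Fin 6}
    (h : ∀ x, P.tiles x ≠ none → r x = r' x) : P.rotate r = P.rotate r' := by
  funext x
  by_cases hx : P.tiles x = none
  · simp [rotate, hx]
  · simp [rotate, h x hx]

theorem isSolution_rotate_iff (P : Puzzle) {S : List (ℤ × ℤ)}
    (hS : ∀ x, P.tiles x ≠ none → x ∈ S) (r : ℤ × ℤ → Fin 6) :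
    IsSolution P (P.rotate r) ↔ ∀ x ∈ S, ∀ d : Fin 6,
      ∀ s ∈ P.rotate r x, ∀ s' ∈ P.rotate r (x + dirs d), s d = s' (d + 3) := by
  refine ⟨fun hs x _ d s hs_x s' hs'_x => hs.2 x d s s' hs_x hs'_x, fun h => ⟨fun x => ?_, ?_⟩⟩
  · refine ⟨fun hx => by simp [rotate, hx], fun t ht => ⟨r x, by simp [rotate, ht]⟩⟩
  · intro x d s s' hs hs'
    have hx : P.tiles x ≠ none := by
      intro hx
      simp [rotate, hx] at hs
    exact h x (hS x hx) d s hs s' hs'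

end Puzzle

theorem IsSolution.exists_eq_rotate {P : Puzzle} {sol : ℤ × ℤ → Option Tile}
    (hs : IsSolution P sol) : ∃ r, sol = P.rotate r := by
  have h : ∀ x, ∃ k : Fin 6, sol x = (P.tiles x).map (rotTile k) := by
    intro x
    rcases ht : P.tiles x with _ | t
    · exact ⟨0, (hs.1 x).1 ht⟩
    · exact (hs.1 x).2 t ht
  choose r hr using h
  exact ⟨r, funext hr⟩

namespace MovePuzzle

open Color

def yrrbby : Tile := ![yellow, red, red, blue, blue, yellow]

def ryybbr : Tile := ![red, yellow, yellow, blue, blue, red]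

def points : List (ℤ × ℤ) := [(-1, -1), (0, -1), (0, 0), (1, 0)]

def tiles (x : ℤ × ℤ) : Option Tile :=
  if x = (1, 0) then some ryybbr
  else if x = (-1, -1) ∨ x = (0, -1) ∨ x = (0, 0) then some yrrbby
  else none

theorem mem_points_of_tiles_ne_none {x : ℤ × ℤ} (hx : tiles x ≠ none) : x ∈ points := by
  unfold tiles at hx
  split_ifs at hx <;> simp_all [points]

def puzzle : Puzzle where
  tiles := tiles
  finite := points.finite_toSet.subset fun _ => mem_points_of_tiles_ne_none
  memT3 x t ht := by
    unfold tiles at ht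
    split_ifs at ht <;> cases ht
    · exact Set.mem_insert_of_mem _ (Set.mem_insert _ _)
    · exact Set.mem_insert _ _

def rotations (a b c d : Fin 6) (x : ℤ × ℤ) : Fin 6 :=
  if x = (-1, -1) then a else if x = (0, -1) then b else if x = (0, 0) then c else d

theorem isSolution_rotations_iff (a b c d : Fin 6) :
    IsSolution puzzle (puzzle.rotate (rotations a b c d)) ↔ ∀ x ∈ points, ∀ e : Fin 6,
      ∀ s ∈ puzzle.rotate (rotations a b c d) x,
      ∀ s' ∈ puzzle.rotate (rotations a b c d) (x + dirs e), s e = s' (e + 3) :=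
  puzzle.isSolution_rotate_iff (fun _ => mem_points_of_tiles_ne_none) _

theorem rotations_eq_of_input_blue : ∀ a b c d : Fin 6, rotTile a yrrbby 3 = blue →
    IsSolution puzzle (puzzle.rotate (rotations a b c d)) → (a, b, c, d) = (1, 5, 3, 3) := by
  simp only [isSolution_rotations_iff]
  decide

theorem rotations_eq_of_input_red : ∀ a b c d : Fin 6, rotTile a yrrbby 3 = red →
    IsSolution puzzle (puzzle.rotate (rotations a b c d)) → (a, b, c, d) = (5, 3, 1, 5) := by
  simp only [isSolution_rotations_iff]
  decide

theorem solColor_rotations_input_iff (a b c d : Fin 6) (col : Color) :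
    SolColor (puzzle.rotate (rotations a b c d)) (-1, -1) 3 col ↔ rotTile a yrrbby 3 = col := by
  simp [SolColor, Puzzle.rotate, puzzle, tiles, rotations]

theorem solColor_rotations_output_iff (a b c d : Fin 6) (col : Color) :
    SolColor (puzzle.rotate (rotations a b c d)) (1, 0) 0 col ↔ rotTile d ryybbr 0 = col := by
  simp [SolColor, Puzzle.rotate, puzzle, tiles, rotations]

theorem eq_rotate_rotations_of_isSolution {sol : ℤ × ℤ → Option Tile}
    (hs : IsSolution puzzle sol) : ∃ a b c d : Fin 6,
      sol = puzzle.rotate (rotations a b c d) := by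
  obtain ⟨r, rfl⟩ := hs.exists_eq_rotate
  refine ⟨r (-1, -1), r (0, -1), r (0, 0), r (1, 0), puzzle.rotate_congr fun x hx => ?_⟩
  have hx : x ∈ points := mem_points_of_tiles_ne_none hx
  simp only [points, List.mem_cons, List.not_mem_nil, or_false] at hx
  rcases hx with rfl | rfl | rfl | rfl <;> rfl

theorem existsUnique_solution_of_input (col : Color) (a b c d : Fin 6)
    (hsol : IsSolution puzzle (puzzle.rotate (rotations a b c d)))
    (hin : rotTile a yrrbby 3 = col) (hout : rotTile d ryybbr 0 = col)
    (huniq : ∀ a' b' c' d' : Fin 6, rotTile a' yrrbby 3 = col →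
      IsSolution puzzle (puzzle.rotate (rotations a' b' c' d')) → (a', b', c', d') = (a, b, c, d)) :
    ∃ sol : ℤ × ℤ → Option Tile,
      (IsSolution puzzle sol ∧ SolColor sol (-1, -1) 3 col ∧ SolColor sol (1, 0) 0 col) ∧
      (∀ sol' : ℤ × ℤ → Option Tile,
        IsSolution puzzle sol' → SolColor sol' (-1, -1) 3 col → sol' = sol) := by
  refine ⟨_, ⟨hsol, (solColor_rotations_input_iff ..).2 hin,
    (solColor_rotations_output_iff ..).2 hout⟩, fun sol' hs' hin' => ?_⟩
  obtain ⟨a', b', c', d', rfl⟩ := eq_rotate_rotations_of_isSolution hs'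
  rw [solColor_rotations_input_iff] at hin'
  obtain ⟨rfl, rfl, rfl, rfl⟩ : a' = a ∧ b' = b ∧ c' = c ∧ d' = d := by
    simpa using huniq a' b' c' d' hin' hs'
  rfl

end MovePuzzle

open MovePuzzle in
/-- the three-color MOVE subpuzzle: input boundary edge at the bottom, output boundary edge at the top horizontally displaced by two positions; for each color `c ∈ {blue, red}` there is exactly one solution with color `c` at the input edge, and it has color `c` at the output edge. -/
theorem three_color_MOVE_subpuzzle :
    ∃ (P : Puzzle) (xIn xOut : ℤ × ℤ),
      IsBoundary P xIn 3 ∧ IsBoundary P xOut 0 ∧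
      (xOut.1 = xIn.1 + 2 ∨ xOut.1 = xIn.1 - 2) ∧ xIn.2 < xOut.2 ∧
      ∀ c ∈ ({Color.blue, Color.red} : Set Color),
        ∃ sol : ℤ × ℤ → Option Tile,
          (IsSolution P sol ∧ SolColor sol xIn 3 c ∧ SolColor sol xOut 0 c) ∧
          (∀ sol' : ℤ × ℤ → Option Tile,
            IsSolution P sol' → SolColor sol' xIn 3 c → sol' = sol) := by
  refine ⟨puzzle, (-1, -1), (1, 0), ⟨by decide, by decide⟩, ⟨by decide, by decide⟩,
    Or.inl rfl, by decide, ?_⟩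
  rintro c (rfl | rfl)
  · exact existsUnique_solution_of_input _ 1 5 3 3
      ((isSolution_rotations_iff ..).2 (by decide)) rfl rfl rotations_eq_of_input_blue
  · exact existsUnique_solution_of_input _ 5 3 1 5
      ((isSolution_rotations_iff ..).2 (by decide)) rfl rfl rotations_eq_of_input_red
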